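/- On the set of all rooted (respectively unrooted) phylogenies over a fixed taxon set of size at least 3 (respectively 4): (i) for p = 0, the parametric triplet (quartet) distance d^(p) is not a distance measure (there exist distinct trees T1 ≠ T2 with d^(0)(T1,T2) = 0); and (ii) for every p ∈ (0, 1/2), d^(p) is a distance measure but not a metric (the triangle inequality fails for some triple of trees). -/

import Mathlib

open Finset

attribute [local instance] Classical.propDecidable

/-- A rooted phylogenetic tree over the taxon set `Fin n`, encoded by its hierarchy of
clusters: for each node of the tree, the set of leaves descending from that node.
The conditions say that the whole leaf set and all singletons are clusters, the empty
set is not a cluster, and that the family is laminar.  Such families correspond exactly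
to rooted phylogenies in which every internal node has at least two children. -/
structure RTree (n : ℕ) where
  clusters : Finset (Finset (Fin n))
  univ_mem : Finset.univ ∈ clusters
  singleton_mem : ∀ x : Fin n, {x} ∈ clusters
  empty_not_mem : ∅ ∉ clusters
  laminar : ∀ C ∈ clusters, ∀ D ∈ clusters, C ⊆ D ∨ D ⊆ C ∨ C ∩ D = ∅

/-- All triplets (3-element subsets) of `Fin n`. -/
def triplets (n : ℕ) : Finset (Finset (Fin n)) :=
  Finset.powersetCard 3 Finset.univ

/-- The cluster family of the restriction `T|X`, for a rooted tree with cluster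
family `F`: the nonempty intersections of clusters with `X`. -/
noncomputable def famRestrict {n : ℕ} (F : Finset (Finset (Fin n))) (X : Finset (Fin n)) :
    Finset (Finset (Fin n)) :=
  (F.image (· ∩ X)).filter (· ≠ ∅)

/-- A triplet `X` is resolved in a rooted tree with cluster family `F` iff the
restriction `T|X` is fully resolved, equivalently iff some cluster contains exactly
two of the three elements of `X`. -/
def famResolved {n : ℕ} (F : Finset (Finset (Fin n))) (X : Finset (Fin n)) : Prop :=
  ∃ C ∈ F, (C ∩ X).card = 2

/-- Triplets resolved, identically, in both trees. -/
noncomputable def famSetS {n : ℕ} (F G : Finset (Finset (Fin n))) :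
    Finset (Finset (Fin n)) :=
  (triplets n).filter fun X =>
    famResolved F X ∧ famResolved G X ∧ famRestrict F X = famRestrict G X

/-- Triplets resolved, differently, in both trees. -/
noncomputable def famSetD {n : ℕ} (F G : Finset (Finset (Fin n))) :
    Finset (Finset (Fin n)) :=
  (triplets n).filter fun X =>
    famResolved F X ∧ famResolved G X ∧ famRestrict F X ≠ famRestrict G X

/-- Triplets resolved in the first tree but not in the second. -/
noncomputable def famSetR1 {n : ℕ} (F G : Finset (Finset (Fin n))) :
    Finset (Finset (Fin n)) :=
  (triplets n).filter fun X => famResolved F X ∧ ¬ famResolved G X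

/-- Triplets resolved in the second tree but not in the first. -/
noncomputable def famSetR2 {n : ℕ} (F G : Finset (Finset (Fin n))) :
    Finset (Finset (Fin n)) :=
  (triplets n).filter fun X => famResolved G X ∧ ¬ famResolved F X

/-- Triplets unresolved in both trees. -/
noncomputable def famSetU {n : ℕ} (F G : Finset (Finset (Fin n))) :
    Finset (Finset (Fin n)) :=
  (triplets n).filter fun X => ¬ famResolved F X ∧ ¬ famResolved G X

/-- The parametric triplet distance, at the level of cluster families. -/
noncomputable def famPdist {n : ℕ} (p : ℝ) (F G : Finset (Finset (Fin n))) : ℝ :=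
  ((famSetD F G).card : ℝ) +
    p * (((famSetR1 F G).card : ℝ) + ((famSetR2 F G).card : ℝ))

namespace RTree

variable {n : ℕ}

/-- The cluster family of the restriction `T|X`. -/
noncomputable def restrict (T : RTree n) (X : Finset (Fin n)) : Finset (Finset (Fin n)) :=
  famRestrict T.clusters X

/-- The triplet `X` is resolved in `T`, i.e. `T|X` is fully resolved. -/
def Resolved (T : RTree n) (X : Finset (Fin n)) : Prop :=
  famResolved T.clusters X

/-- A rooted phylogeny is fully resolved (all internal nodes have exactly two
children) iff every triplet is resolved in it. -/
def FullyResolved (T : RTree n) : Prop :=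
  ∀ X ∈ triplets n, T.Resolved X

noncomputable def setS (T₁ T₂ : RTree n) : Finset (Finset (Fin n)) :=
  famSetS T₁.clusters T₂.clusters

noncomputable def setD (T₁ T₂ : RTree n) : Finset (Finset (Fin n)) :=
  famSetD T₁.clusters T₂.clusters

noncomputable def setR1 (T₁ T₂ : RTree n) : Finset (Finset (Fin n)) :=
  famSetR1 T₁.clusters T₂.clusters

noncomputable def setR2 (T₁ T₂ : RTree n) : Finset (Finset (Fin n)) :=
  famSetR2 T₁.clusters T₂.clusters

noncomputable def setU (T₁ T₂ : RTree n) : Finset (Finset (Fin n)) :=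
  famSetU T₁.clusters T₂.clusters

/-- The parametric triplet distance `d⁽ᵖ⁾(T₁,T₂)`. -/
noncomputable def pdist (p : ℝ) (T₁ T₂ : RTree n) : ℝ :=
  famPdist p T₁.clusters T₂.clusters

theorem clusters_injective : Function.Injective (clusters (n := n)) := by
  rintro ⟨s₁, _, _, _, _⟩ ⟨s₂, _, _, _, _⟩ h
  simp only [mk.injEq] at h ⊢
  exact h

noncomputable instance : Fintype (RTree n) :=
  Fintype.ofInjective clusters clusters_injective

end RTree

/-- An unrooted phylogenetic tree over the taxon set `Fin n`, encoded by its split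
system: the collection of all sets of leaves lying on one side of some edge of the
tree.  By the splits-equivalence (Buneman) theorem, the families satisfying these
conditions (all trivial splits present, closure under complementation, pairwise
compatibility) correspond exactly to unrooted phylogenies in which every internal
node has degree at least three. -/
structure UTree (n : ℕ) where
  splits : Finset (Finset (Fin n))
  empty_not_mem : ∅ ∉ splits
  trivial_mem : ∀ x : Fin n, ({x} : Finset (Fin n)) = Finset.univ ∨ {x} ∈ splits
  compl_mem : ∀ A ∈ splits, Finset.univ \ A ∈ splits
  compat : ∀ A ∈ splits, ∀ B ∈ splits, A ⊆ B ∨ B ⊆ A ∨ A ∩ B = ∅ ∨ A ∪ B = Finset.univ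

/-- All quartets (4-element subsets) of `Fin n`. -/
def quartets (n : ℕ) : Finset (Finset (Fin n)) :=
  Finset.powersetCard 4 Finset.univ

/-- The split system of the restriction `T|X`, for an unrooted tree with split
system `F`: the proper nonempty intersections of split sides with `X`. -/
noncomputable def famRestrictU {n : ℕ} (F : Finset (Finset (Fin n))) (X : Finset (Fin n)) :
    Finset (Finset (Fin n)) :=
  (F.image (· ∩ X)).filter fun A => A ≠ ∅ ∧ A ≠ X

/-- A quartet `X` is resolved in an unrooted tree with split system `F` iff the
restriction `T|X` is fully resolved, equivalently iff some split side contains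
exactly two of the four elements of `X`. -/
def famResolvedU {n : ℕ} (F : Finset (Finset (Fin n))) (X : Finset (Fin n)) : Prop :=
  ∃ A ∈ F, (A ∩ X).card = 2

/-- Quartets resolved, identically, in both trees. -/
noncomputable def famSetSU {n : ℕ} (F G : Finset (Finset (Fin n))) :
    Finset (Finset (Fin n)) :=
  (quartets n).filter fun X =>
    famResolvedU F X ∧ famResolvedU G X ∧ famRestrictU F X = famRestrictU G X

/-- Quartets resolved, differently, in both trees. -/
noncomputable def famSetDU {n : ℕ} (F G : Finset (Finset (Fin n))) :
    Finset (Finset (Fin n)) :=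
  (quartets n).filter fun X =>
    famResolvedU F X ∧ famResolvedU G X ∧ famRestrictU F X ≠ famRestrictU G X

/-- Quartets resolved in the first tree but not in the second. -/
noncomputable def famSetR1U {n : ℕ} (F G : Finset (Finset (Fin n))) :
    Finset (Finset (Fin n)) :=
  (quartets n).filter fun X => famResolvedU F X ∧ ¬ famResolvedU G X

/-- Quartets resolved in the second tree but not in the first. -/
noncomputable def famSetR2U {n : ℕ} (F G : Finset (Finset (Fin n))) :
    Finset (Finset (Fin n)) :=
  (quartets n).filter fun X => famResolvedU G X ∧ ¬ famResolvedU F X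

/-- Quartets unresolved in both trees. -/
noncomputable def famSetUU {n : ℕ} (F G : Finset (Finset (Fin n))) :
    Finset (Finset (Fin n)) :=
  (quartets n).filter fun X => ¬ famResolvedU F X ∧ ¬ famResolvedU G X

/-- The parametric quartet distance, at the level of split systems. -/
noncomputable def famPdistU {n : ℕ} (p : ℝ) (F G : Finset (Finset (Fin n))) : ℝ :=
  ((famSetDU F G).card : ℝ) +
    p * (((famSetR1U F G).card : ℝ) + ((famSetR2U F G).card : ℝ))

namespace UTree

variable {n : ℕ}

/-- The split system of the restriction `T|X`. -/
noncomputable def restrict (T : UTree n) (X : Finset (Fin n)) : Finset (Finset (Fin n)) :=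
  famRestrictU T.splits X

/-- The quartet `X` is resolved in `T`, i.e. `T|X` is fully resolved. -/
def Resolved (T : UTree n) (X : Finset (Fin n)) : Prop :=
  famResolvedU T.splits X

/-- An unrooted phylogeny is fully resolved (all internal nodes have degree exactly
three) iff every quartet is resolved in it. -/
def FullyResolved (T : UTree n) : Prop :=
  ∀ X ∈ quartets n, T.Resolved X

noncomputable def setS (T₁ T₂ : UTree n) : Finset (Finset (Fin n)) :=
  famSetSU T₁.splits T₂.splits

noncomputable def setD (T₁ T₂ : UTree n) : Finset (Finset (Fin n)) :=
  famSetDU T₁.splits T₂.splits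

noncomputable def setR1 (T₁ T₂ : UTree n) : Finset (Finset (Fin n)) :=
  famSetR1U T₁.splits T₂.splits

noncomputable def setR2 (T₁ T₂ : UTree n) : Finset (Finset (Fin n)) :=
  famSetR2U T₁.splits T₂.splits

noncomputable def setU (T₁ T₂ : UTree n) : Finset (Finset (Fin n)) :=
  famSetUU T₁.splits T₂.splits

/-- The parametric quartet distance `d⁽ᵖ⁾(T₁,T₂)`. -/
noncomputable def pdist (p : ℝ) (T₁ T₂ : UTree n) : ℝ :=
  famPdistU p T₁.splits T₂.splits

theorem splits_injective : Function.Injective (splits (n := n)) := by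
  rintro ⟨s₁, _, _, _, _⟩ ⟨s₂, _, _, _, _⟩ h
  simp only [mk.injEq] at h ⊢
  exact h

noncomputable instance : Fintype (UTree n) :=
  Fintype.ofInjective splits splits_injective

end UTree

/-!
The star tree resolves no triplet (quartet), so its distance to a tree `T` is `p` times the
number of triplets resolved in `T`; at `p = 0` it is at distance `0` from a tree with a single
cherry. Two trees with cherries `{a, b}` and `{a, c}` resolve every common triplet differently,
so going through the star replaces the cost `1` of each such triplet by `2p < 1`.

For `p > 0`, distance `0` forces both trees to restrict identically to every triplet resolved in
one of them. A laminar family containing a superset of a set `C` with at least two elements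
contains `C` itself as soon as any `x ≠ y` in `C` and `z ∉ C` are separated by a member, so the
clusters of a rooted tree are recovered from its triplets; for an unrooted tree, the splits
avoiding a fixed leaf form such a laminar family and are recovered from its quartets.
-/

section ParamDist

/-! `Q` stands for the triplets or quartets, `R x X` for "`X` is resolved in `x`" and `ρ x X` for
the restriction `x|X`. -/

variable {α ι β : Type*} [DecidableEq β] (Q : Finset ι) (R : α → ι → Prop) (ρ : α → ι → β)

noncomputable def disagreeSet (x y : α) : Finset ι :=
  Q.filter fun X => R x X ∧ R y X ∧ ρ x X ≠ ρ y X

noncomputable def onlyResolvedSet (x y : α) : Finset ι :=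
  Q.filter fun X => R x X ∧ ¬ R y X

noncomputable def paramDist (p : ℝ) (x y : α) : ℝ :=
  (disagreeSet Q R ρ x y).card +
    p * ((onlyResolvedSet Q R x y).card + (onlyResolvedSet Q R y x).card)

variable {Q R ρ}

theorem disagreeSet_comm (x y : α) : disagreeSet Q R ρ x y = disagreeSet Q R ρ y x := by
  ext X
  simp only [disagreeSet, mem_filter, ne_comm]
  tauto

theorem paramDist_comm (p : ℝ) (x y : α) : paramDist Q R ρ p x y = paramDist Q R ρ p y x := by
  rw [paramDist, paramDist, disagreeSet_comm]
  ring

theorem paramDist_self (p : ℝ) (x : α) : paramDist Q R ρ p x x = 0 := by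
  simp [paramDist, disagreeSet, onlyResolvedSet]

theorem paramDist_nonneg {p : ℝ} (hp : 0 ≤ p) (x y : α) : 0 ≤ paramDist Q R ρ p x y := by
  unfold paramDist
  positivity

theorem restrict_eq_of_paramDist_eq_zero {p : ℝ} (hp : 0 < p) {x y : α}
    (h : paramDist Q R ρ p x y = 0) {X : ι} (hX : X ∈ Q) (hx : R x X) : ρ x X = ρ y X := by
  rw [paramDist, add_eq_zero_iff_of_nonneg (by positivity) (by positivity), mul_eq_zero,
    add_eq_zero_iff_of_nonneg (by positivity) (by positivity)] at h
  obtain ⟨hdis, hp0 | ⟨honly, -⟩⟩ := h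
  · exact absurd hp0 hp.ne'
  simp only [Nat.cast_eq_zero, card_eq_zero, disagreeSet, onlyResolvedSet,
    filter_eq_empty_iff] at hdis honly
  have hy : R y X := by simpa [hx] using honly hX
  simpa [hx, hy] using hdis hX

theorem paramDist_eq_of_unresolved_right {s : α} (hs : ∀ X ∈ Q, ¬ R s X) (p : ℝ) (x : α) :
    paramDist Q R ρ p x s = p * (Q.filter (R x)).card := by
  have hdis : disagreeSet Q R ρ x s = ∅ := filter_eq_empty_iff.2 fun X hX h => hs X hX h.2.1
  have honly : onlyResolvedSet Q R s x = ∅ := filter_eq_empty_iff.2 fun X hX h => hs X hX h.1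
  have honly' : onlyResolvedSet Q R x s = Q.filter (R x) :=
    filter_congr fun X hX => and_iff_left (hs X hX)
  simp [paramDist, hdis, honly, honly']

theorem card_filter_eq_card_disagreeSet_add {x y : α}
    (hdis : ∀ X ∈ Q, R x X → R y X → ρ x X ≠ ρ y X) :
    (Q.filter (R x)).card = (disagreeSet Q R ρ x y).card + (onlyResolvedSet Q R x y).card := by
  rw [← card_filter_add_card_filter_not (s := Q.filter (R x)) (p := R y), filter_filter,
    filter_filter]
  congr 2
  exact filter_congr fun X hX => by simpa using hdis X hX

theorem paramDist_add_paramDist_lt {s : α} (hs : ∀ X ∈ Q, ¬ R s X) {p : ℝ} (hp : p < 1 / 2)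
    {x y : α} (hdis : ∀ X ∈ Q, R x X → R y X → ρ x X ≠ ρ y X)
    (hboth : ∃ X ∈ Q, R x X ∧ R y X) :
    paramDist Q R ρ p x s + paramDist Q R ρ p s y < paramDist Q R ρ p x y := by
  have hx := card_filter_eq_card_disagreeSet_add hdis
  have hy := card_filter_eq_card_disagreeSet_add (x := y) (y := x) fun X hX hyX hxX =>
    (hdis X hX hxX hyX).symm
  have hD : (1 : ℝ) ≤ (disagreeSet Q R ρ x y).card := by
    obtain ⟨X, hX, hxX, hyX⟩ := hboth
    have : 0 < (disagreeSet Q R ρ x y).card :=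
      card_pos.2 ⟨X, mem_filter.2 ⟨hX, hxX, hyX, hdis X hX hxX hyX⟩⟩
    exact_mod_cast this
  rw [paramDist_comm p s y, paramDist_eq_of_unresolved_right hs,
    paramDist_eq_of_unresolved_right hs, hx, hy, disagreeSet_comm y x, paramDist]
  push_cast
  -- Through `s`, each element of `disagreeSet x y` costs `p + p` instead of `1`.
  nlinarith

end ParamDist

section FinsetAux

variable {α : Type*} [DecidableEq α]

theorem inter_insert_insert_eq_pair {C S : Finset α} {x y : α} (hx : x ∈ C) (hy : y ∈ C)
    (hS : Disjoint C S) : C ∩ insert x (insert y S) = {x, y} := by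
  rw [inter_insert_of_mem hx, inter_insert_of_mem hy, disjoint_iff_inter_eq_empty.1 hS,
    insert_empty]

theorem mem_mem_notMem_of_inter_eq_pair {E X : Finset α} {x y z : α} (h : E ∩ X = {x, y})
    (hz : z ∈ X) (hzx : z ≠ x) (hzy : z ≠ y) : x ∈ E ∧ y ∈ E ∧ z ∉ E := by
  have hmem : ∀ t, t ∈ E ∧ t ∈ X ↔ t = x ∨ t = y := by simpa [Finset.ext_iff] using h
  exact ⟨((hmem x).2 (.inl rfl)).1, ((hmem y).2 (.inr rfl)).1,
    fun hzE => by rcases (hmem z).1 ⟨hzE, hz⟩ with h | h <;> contradiction⟩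

theorem card_pair_inter_eq_two {a b : α} (hab : a ≠ b) {X : Finset α} :
    ({a, b} ∩ X).card = 2 ↔ a ∈ X ∧ b ∈ X := by
  rw [← singleton_subset_iff (a := b), ← insert_subset_iff, ← inter_eq_left]
  constructor
  · exact fun h => eq_of_subset_of_card_le inter_subset_left (by rw [h, card_pair hab])
  · intro h
    rw [h, card_pair hab]

theorem card_univ_sdiff_inter_add_card_inter [Fintype α] (A X : Finset α) : ((univ \ A) ∩ X).card + (A ∩ X).card = X.card := by
  rw [← card_sdiff_add_card_inter X A, inter_comm A X]
  congr 2
  ext t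
  simp [and_comm]

end FinsetAux

section Laminar

variable {α : Type*} [DecidableEq α] {𝓕 : Finset (Finset α)}

theorem exists_mem_superset_notMem
    (hlam : ∀ E ∈ 𝓕, ∀ E' ∈ 𝓕, (E ∩ E').Nonempty → E ⊆ E' ∨ E' ⊆ E)
    {C : Finset α} (hC : C.Nonempty) {x z : α}
    (hsep : ∀ y ∈ C, ∃ E ∈ 𝓕, x ∈ E ∧ y ∈ E ∧ z ∉ E) :
    ∃ E ∈ 𝓕, C ⊆ E ∧ z ∉ E := by
  -- The members of `𝓕` containing `x` form a chain; take the largest one avoiding `z`.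
  set W := 𝓕.filter fun E => x ∈ E ∧ z ∉ E
  have hW : ∀ y ∈ C, ∃ E ∈ W, y ∈ E := fun y hy => by
    obtain ⟨E, hE, hxE, hyE, hzE⟩ := hsep y hy
    exact ⟨E, mem_filter.2 ⟨hE, hxE, hzE⟩, hyE⟩
  obtain ⟨y₀, hy₀⟩ := hC
  obtain ⟨E₀, hE₀, -⟩ := hW y₀ hy₀
  obtain ⟨E, hEW, hEmax⟩ := W.exists_max_image card ⟨E₀, hE₀⟩
  obtain ⟨hE, hxE, hzE⟩ := mem_filter.1 hEW
  refine ⟨E, hE, fun y hy => ?_, hzE⟩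
  obtain ⟨E', hE'W, hyE'⟩ := hW y hy
  obtain ⟨hE', hxE', -⟩ := mem_filter.1 hE'W
  rcases hlam E' hE' E hE ⟨x, mem_inter.2 ⟨hxE', hxE⟩⟩ with h | h
  · exact h hyE'
  · rwa [eq_of_subset_of_card_le h (hEmax E' hE'W)]

theorem mem_of_separated
    (hlam : ∀ E ∈ 𝓕, ∀ E' ∈ 𝓕, (E ∩ E').Nonempty → E ⊆ E' ∨ E' ⊆ E)
    {C D : Finset α} (hD : D ∈ 𝓕) (hCD : C ⊆ D) (hC : C.Nontrivial)
    (hsep : ∀ x ∈ C, ∀ y ∈ C, x ≠ y → ∀ z ∉ C, ∃ E ∈ 𝓕, x ∈ E ∧ y ∈ E ∧ z ∉ E) :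
    C ∈ 𝓕 := by
  -- The smallest member of `𝓕` containing `C` is `C` itself.
  obtain ⟨D', hD'S, hD'min⟩ :=
    (𝓕.filter (C ⊆ ·)).exists_min_image card ⟨D, mem_filter.2 ⟨hD, hCD⟩⟩
  obtain ⟨hD', hCD'⟩ := mem_filter.1 hD'S
  by_contra hCF
  obtain ⟨z, hzD', hzC⟩ := not_subset.1 fun h => hCF (subset_antisymm hCD' h ▸ hD')
  obtain ⟨x, hx, x', hx', hxx'⟩ := hC
  obtain ⟨E, hE, hCE, hzE⟩ := exists_mem_superset_notMem hlam ⟨x, hx⟩ (x := x) (z := z)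
    fun y hy => by
      obtain rfl | hxy := eq_or_ne x y
      · obtain ⟨E, hE, hxE, -, hzE⟩ := hsep x hx x' hx' hxx' z hzC
        exact ⟨E, hE, hxE, hxE, hzE⟩
      · exact hsep x hx y hy hxy z hzC
  have hED' : E ⊂ D' := by
    refine ssubset_of_subset_of_ne ?_ fun h => hzE (h ▸ hzD')
    refine (hlam E hE D' hD' ⟨x, mem_inter.2 ⟨hCE hx, hCD' hx⟩⟩).resolve_right fun h => ?_
    exact hzE (h hzD')
  exact (card_lt_card hED').not_ge (hD'min E (mem_filter.2 ⟨hE, hCE⟩))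

end Laminar

section Rooted

def ClusterCompatible {α : Type*} [DecidableEq α] (C D : Finset α) : Prop :=
  C ⊆ D ∨ D ⊆ C ∨ C ∩ D = ∅

theorem ClusterCompatible.symm {α : Type*} [DecidableEq α] {C D : Finset α}
    (h : ClusterCompatible C D) : ClusterCompatible D C := by
  unfold ClusterCompatible at *
  rw [inter_comm]
  tauto

variable {n : ℕ}

def starClusters (n : ℕ) : Finset (Finset (Fin n)) :=
  insert univ (univ.image singleton)

theorem clusterCompatible_of_mem_starClusters (C : Finset (Fin n)) {D : Finset (Fin n)}
    (hD : D ∈ starClusters n) : ClusterCompatible C D := by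
  rcases mem_insert.1 hD with rfl | hD
  · exact .inl (subset_univ C)
  obtain ⟨x, -, rfl⟩ := mem_image.1 hD
  by_cases hx : x ∈ C
  · exact .inr (.inl (singleton_subset_iff.2 hx))
  · exact .inr (.inr (inter_singleton_of_notMem hx))

namespace RTree

theorem subset_or_subset_of_inter_nonempty (T : RTree n) :
    ∀ E ∈ T.clusters, ∀ E' ∈ T.clusters, (E ∩ E').Nonempty → E ⊆ E' ∨ E' ⊆ E :=
  fun E hE E' hE' h => (T.laminar E hE E' hE').imp_right (·.resolve_right h.ne_empty)

theorem mem_restrict {T : RTree n} {X B : Finset (Fin n)} :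
    B ∈ T.restrict X ↔ (∃ E ∈ T.clusters, E ∩ X = B) ∧ B ≠ ∅ := by
  simp [restrict, famRestrict]

theorem exists_separating_cluster {T₁ T₂ : RTree n}
    (h : ∀ X ∈ triplets n, T₁.Resolved X → T₁.restrict X = T₂.restrict X)
    {C : Finset (Fin n)} (hC : C ∈ T₁.clusters) {x y z : Fin n} (hx : x ∈ C) (hy : y ∈ C)
    (hxy : x ≠ y) (hz : z ∉ C) : ∃ E ∈ T₂.clusters, x ∈ E ∧ y ∈ E ∧ z ∉ E := by
  have hzx : z ≠ x := fun h => hz (h ▸ hx)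
  have hzy : z ≠ y := fun h => hz (h ▸ hy)
  have hCX : C ∩ {x, y, z} = {x, y} :=
    inter_insert_insert_eq_pair hx hy (disjoint_singleton_right.2 hz)
  have hX : {x, y, z} ∈ triplets n :=
    mem_powersetCard_univ.2 (card_eq_three.2 ⟨x, y, z, hxy, hzx.symm, hzy.symm, rfl⟩)
  have hmem : {x, y} ∈ T₁.restrict {x, y, z} :=
    mem_restrict.2 ⟨⟨C, hC, hCX⟩, insert_ne_empty _ _⟩
  rw [h _ hX ⟨C, hC, by rw [hCX, card_pair hxy]⟩, mem_restrict] at hmem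
  obtain ⟨⟨E, hE, hEX⟩, -⟩ := hmem
  exact ⟨E, hE, mem_mem_notMem_of_inter_eq_pair hEX (by simp) hzx hzy⟩

theorem clusters_subset_of_restrict_eq {T₁ T₂ : RTree n}
    (h : ∀ X ∈ triplets n, T₁.Resolved X → T₁.restrict X = T₂.restrict X) :
    T₁.clusters ⊆ T₂.clusters := by
  intro C hC
  have hCne : C.Nonempty := nonempty_iff_ne_empty.2 fun h => T₁.empty_not_mem (h ▸ hC)
  obtain ⟨x, rfl⟩ | hCnt := hCne.exists_eq_singleton_or_nontrivial
  · exact T₂.singleton_mem x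
  exact mem_of_separated T₂.subset_or_subset_of_inter_nonempty T₂.univ_mem (subset_univ C) hCnt
    fun x hx y hy hxy z hz => exists_separating_cluster h hC hx hy hxy hz

theorem pdist_eq_paramDist (p : ℝ) (T₁ T₂ : RTree n) :
    pdist p T₁ T₂ = paramDist (triplets n) Resolved restrict p T₁ T₂ :=
  rfl

theorem pdist_nonneg {p : ℝ} (hp : 0 ≤ p) (T₁ T₂ : RTree n) : 0 ≤ pdist p T₁ T₂ := by
  rw [pdist_eq_paramDist]
  exact paramDist_nonneg hp T₁ T₂

theorem pdist_comm (p : ℝ) (T₁ T₂ : RTree n) : pdist p T₁ T₂ = pdist p T₂ T₁ := by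
  simp only [pdist_eq_paramDist]
  exact paramDist_comm p T₁ T₂

theorem pdist_eq_zero_iff {p : ℝ} (hp : 0 < p) {T₁ T₂ : RTree n} :
    pdist p T₁ T₂ = 0 ↔ T₁ = T₂ := by
  refine ⟨fun h => clusters_injective (subset_antisymm ?_ ?_), fun h => ?_⟩
  · rw [pdist_eq_paramDist] at h
    exact clusters_subset_of_restrict_eq fun X hX => restrict_eq_of_paramDist_eq_zero hp h hX
  · rw [pdist_comm, pdist_eq_paramDist] at h
    exact clusters_subset_of_restrict_eq fun X hX => restrict_eq_of_paramDist_eq_zero hp h hX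
  · rw [h, pdist_eq_paramDist]
    exact paramDist_self p T₂

def star (hn : 0 < n) : RTree n where
  clusters := starClusters n
  univ_mem := mem_insert_self _ _
  singleton_mem x := mem_insert_of_mem (mem_image_of_mem _ (mem_univ x))
  empty_not_mem := by
    simp only [starClusters, mem_insert, mem_image, mem_univ, true_and, not_or, not_exists]
    exact ⟨(univ_nonempty_iff.2 ⟨⟨0, hn⟩⟩).ne_empty.symm, fun x => singleton_ne_empty x⟩
  laminar C _ _ hD := clusterCompatible_of_mem_starClusters C hD

def addCluster (T : RTree n) (C : Finset (Fin n)) (hC : C.Nonempty)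
    (hcompat : ∀ D ∈ T.clusters, ClusterCompatible C D) : RTree n where
  clusters := insert C T.clusters
  univ_mem := mem_insert_of_mem T.univ_mem
  singleton_mem x := mem_insert_of_mem (T.singleton_mem x)
  empty_not_mem := by
    rw [mem_insert, not_or]
    exact ⟨hC.ne_empty.symm, T.empty_not_mem⟩
  laminar := by
    simp only [mem_insert]
    rintro D (rfl | hD) D' (rfl | hD')
    · exact .inl subset_rfl
    · exact hcompat D' hD'
    · exact (hcompat D hD).symm
    · exact T.laminar D hD D' hD'

def cherry (hn : 0 < n) (a b : Fin n) : RTree n :=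
  (star hn).addCluster {a, b} (insert_nonempty _ _)
    fun _ hD => clusterCompatible_of_mem_starClusters _ hD

theorem not_resolved_star (hn : 0 < n) {X : Finset (Fin n)} (hX : X ∈ triplets n) :
    ¬ (star hn).Resolved X := by
  rintro ⟨D, hD, hcard⟩
  have hX3 := (mem_powersetCard_univ.1 hX : X.card = 3)
  rcases mem_insert.1 hD with rfl | hD
  · rw [univ_inter] at hcard
    omega
  · obtain ⟨x, -, rfl⟩ := mem_image.1 hD
    have := card_le_card (inter_subset_left : {x} ∩ X ⊆ {x})
    rw [card_singleton] at this
    omega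

theorem resolved_addCluster_iff {T : RTree n} {C : Finset (Fin n)} {hC : C.Nonempty}
    {hcompat : ∀ D ∈ T.clusters, ClusterCompatible C D} {X : Finset (Fin n)} :
    (T.addCluster C hC hcompat).Resolved X ↔ (C ∩ X).card = 2 ∨ T.Resolved X := by
  simp [Resolved, famResolved, addCluster]

theorem cherry_resolved_iff (hn : 0 < n) {a b : Fin n} (hab : a ≠ b) {X : Finset (Fin n)}
    (hX : X ∈ triplets n) : (cherry hn a b).Resolved X ↔ a ∈ X ∧ b ∈ X := by
  rw [cherry, resolved_addCluster_iff, card_pair_inter_eq_two hab,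
    or_iff_left (not_resolved_star hn hX)]

theorem mem_of_mem_cherry (hn : 0 < n) {a b c : Fin n} (hba : b ≠ a) (hbc : b ≠ c)
    {E : Finset (Fin n)} (hE : E ∈ (cherry hn a c).clusters) (ha : a ∈ E) (hb : b ∈ E) :
    c ∈ E := by
  simp only [cherry, addCluster, star, starClusters, mem_insert, mem_image, mem_univ,
    true_and] at hE
  rcases hE with rfl | rfl | ⟨x, rfl⟩
  · simp [hba, hbc] at hb
  · exact mem_univ c
  · exact absurd ((mem_singleton.1 hb).trans (mem_singleton.1 ha).symm) hba

theorem cherry_restrict_ne (hn : 0 < n) {a b c : Fin n} (hab : a ≠ b) (hac : a ≠ c)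
    (hbc : b ≠ c) {X : Finset (Fin n)} (ha : a ∈ X) (hb : b ∈ X) (hc : c ∈ X) :
    (cherry hn a b).restrict X ≠ (cherry hn a c).restrict X := by
  intro h
  have hmem : {a, b} ∈ (cherry hn a b).restrict X :=
    mem_restrict.2 ⟨⟨{a, b}, mem_insert_self _ _,
      inter_eq_left.2 (insert_subset ha (singleton_subset_iff.2 hb))⟩, insert_ne_empty _ _⟩
  rw [h, mem_restrict] at hmem
  obtain ⟨⟨E, hE, hEX⟩, -⟩ := hmem
  obtain ⟨haE, hbE, hcE⟩ := mem_mem_notMem_of_inter_eq_pair hEX hc hac.symm hbc.symm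
  exact hcE (mem_of_mem_cherry hn hab.symm hbc hE haE hbE)

theorem exists_ne_pdist_zero (hn : 3 ≤ n) : ∃ T₁ T₂ : RTree n, T₁ ≠ T₂ ∧ pdist 0 T₁ T₂ = 0 := by
  obtain ⟨X, -, hX⟩ := exists_subset_card_eq (s := (univ : Finset (Fin n))) (by simpa using hn)
  obtain ⟨a, b, c, hab, -, -, rfl⟩ := card_eq_three.1 hX
  have hX : {a, b, c} ∈ triplets n := mem_powersetCard_univ.2 hX
  have hpos : 0 < n := by omega
  refine ⟨cherry hpos a b, star hpos, fun h => ?_, ?_⟩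
  · exact not_resolved_star hpos hX (h ▸ (cherry_resolved_iff hpos hab hX).2 (by simp))
  · rw [pdist_eq_paramDist,
      paramDist_eq_of_unresolved_right (fun X hX => not_resolved_star hpos hX), zero_mul]

theorem exists_pdist_add_pdist_lt (hn : 3 ≤ n) {p : ℝ} (hp : p < 1 / 2) :
    ∃ T₁ T₂ T₃ : RTree n, pdist p T₁ T₂ + pdist p T₂ T₃ < pdist p T₁ T₃ := by
  obtain ⟨X, -, hX⟩ := exists_subset_card_eq (s := (univ : Finset (Fin n))) (by simpa using hn)
  obtain ⟨a, b, c, hab, hac, hbc, rfl⟩ := card_eq_three.1 hX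
  have hX : {a, b, c} ∈ triplets n := mem_powersetCard_univ.2 hX
  have hpos : 0 < n := by omega
  refine ⟨cherry hpos a b, star hpos, cherry hpos a c, ?_⟩
  simp only [pdist_eq_paramDist]
  refine paramDist_add_paramDist_lt (fun X hX => not_resolved_star hpos hX) hp
    (fun Y hY hYb hYc => ?_) ⟨_, hX, ?_, ?_⟩
  · obtain ⟨ha, hb⟩ := (cherry_resolved_iff hpos hab hY).1 hYb
    exact cherry_restrict_ne hpos hab hac hbc ha hb ((cherry_resolved_iff hpos hac hY).1 hYc).2
  · exact (cherry_resolved_iff hpos hab hX).2 (by simp)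
  · exact (cherry_resolved_iff hpos hac hX).2 (by simp)

end RTree

end Rooted

section Unrooted

section SplitCompatible

variable {α : Type*} [DecidableEq α] [Fintype α]

def SplitCompatible (A B : Finset α) : Prop :=
  A ⊆ B ∨ B ⊆ A ∨ A ∩ B = ∅ ∨ A ∪ B = univ

theorem SplitCompatible.symm {A B : Finset α} (h : SplitCompatible A B) : SplitCompatible B A := by
  unfold SplitCompatible at *
  rw [inter_comm, union_comm]
  tauto

theorem SplitCompatible.compl_left {A B : Finset α} (h : SplitCompatible A B) :
    SplitCompatible (univ \ A) B := by
  rcases h with h | h | h | h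
  · refine .inr (.inr (.inr (eq_univ_of_forall fun t => ?_)))
    by_cases ht : t ∈ A
    · exact mem_union_right _ (h ht)
    · exact mem_union_left _ (mem_sdiff.2 ⟨mem_univ t, ht⟩)
  · exact .inr (.inr (.inl (disjoint_iff_inter_eq_empty.1 (sdiff_disjoint.mono_right h))))
  · exact .inr (.inl (subset_sdiff.2 ⟨subset_univ B, (disjoint_iff_inter_eq_empty.2 h).symm⟩))
  · exact .inl (sdiff_le_iff.2 h.ge)

theorem splitCompatible_singleton_left (x : α) (B : Finset α) : SplitCompatible {x} B := by
  by_cases hx : x ∈ B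
  · exact .inl (singleton_subset_iff.2 hx)
  · exact .inr (.inr (.inl (singleton_inter_of_notMem hx)))

end SplitCompatible

variable {m : ℕ}

def starSplits (m : ℕ) : Finset (Finset (Fin m)) :=
  univ.image singleton ∪ univ.image fun x => univ \ {x}

theorem splitCompatible_of_mem_starSplits (A : Finset (Fin m)) {B : Finset (Fin m)}
    (hB : B ∈ starSplits m) : SplitCompatible A B := by
  rcases mem_union.1 hB with hB | hB <;> obtain ⟨x, -, rfl⟩ := mem_image.1 hB
  · exact (splitCompatible_singleton_left x A).symm
  · exact (splitCompatible_singleton_left x A).compl_left.symm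

namespace UTree

theorem ne_univ_of_mem {T : UTree m} {A : Finset (Fin m)} (hA : A ∈ T.splits) : A ≠ univ := by
  rintro rfl
  have := T.compl_mem _ hA
  rw [Finset.sdiff_self] at this
  exact T.empty_not_mem this

theorem subset_or_subset_of_inter_nonempty (T : UTree m) (w : Fin m) :
    ∀ E ∈ T.splits.filter (w ∉ ·), ∀ E' ∈ T.splits.filter (w ∉ ·),
      (E ∩ E').Nonempty → E ⊆ E' ∨ E' ⊆ E := by
  simp only [mem_filter]
  rintro E ⟨hE, hwE⟩ E' ⟨hE', hwE'⟩ h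
  rcases T.compat E hE E' hE' with h' | h' | h' | h'
  · exact .inl h'
  · exact .inr h'
  · exact absurd h' h.ne_empty
  · exact absurd (h' ▸ mem_univ w) (by simp [hwE, hwE'])

theorem mem_restrict {T : UTree m} {X B : Finset (Fin m)} :
    B ∈ T.restrict X ↔ (∃ E ∈ T.splits, E ∩ X = B) ∧ B ≠ ∅ ∧ B ≠ X := by
  simp [restrict, famRestrictU]

theorem exists_separating_split {T₁ T₂ : UTree m}
    (h : ∀ X ∈ quartets m, T₁.Resolved X → T₁.restrict X = T₂.restrict X)
    {A : Finset (Fin m)} (hA : A ∈ T₁.splits) {x y z w : Fin m} (hx : x ∈ A) (hy : y ∈ A)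
    (hxy : x ≠ y) (hz : z ∉ A) (hw : w ∉ A) (hzw : z ≠ w) :
    ∃ E ∈ T₂.splits, x ∈ E ∧ y ∈ E ∧ z ∉ E ∧ w ∉ E := by
  have hzx : z ≠ x := fun h => hz (h ▸ hx)
  have hzy : z ≠ y := fun h => hz (h ▸ hy)
  have hwx : w ≠ x := fun h => hw (h ▸ hx)
  have hwy : w ≠ y := fun h => hw (h ▸ hy)
  have hAX : A ∩ {x, y, z, w} = {x, y} :=
    inter_insert_insert_eq_pair hx hy (disjoint_left.2 fun t ht => by
      simp only [mem_insert, mem_singleton]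
      rintro (rfl | rfl) <;> contradiction)
  have hX : {x, y, z, w} ∈ quartets m := mem_powersetCard_univ.2
    (card_eq_four.2 ⟨x, y, z, w, hxy, hzx.symm, hwx.symm, hzy.symm, hwy.symm, hzw, rfl⟩)
  have hmem : {x, y} ∈ T₁.restrict {x, y, z, w} :=
    mem_restrict.2 ⟨⟨A, hA, hAX⟩, insert_ne_empty _ _, fun h => by
      have : z ∈ ({x, y} : Finset (Fin m)) := by rw [h]; simp
      simp [hzx, hzy] at this⟩
  rw [h _ hX ⟨A, hA, by rw [hAX, card_pair hxy]⟩, mem_restrict] at hmem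
  obtain ⟨⟨E, hE, hEX⟩, -⟩ := hmem
  obtain ⟨hxE, hyE, hzE⟩ := mem_mem_notMem_of_inter_eq_pair hEX (by simp) hzx hzy
  exact ⟨E, hE, hxE, hyE, hzE, (mem_mem_notMem_of_inter_eq_pair hEX (by simp) hwx hwy).2.2⟩

theorem splits_subset_of_restrict_eq {T₁ T₂ : UTree m}
    (h : ∀ X ∈ quartets m, T₁.Resolved X → T₁.restrict X = T₂.restrict X) :
    T₁.splits ⊆ T₂.splits := by
  intro A hA
  obtain ⟨w, hwA⟩ : ∃ w, w ∉ A := by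
    by_contra! hw
    exact ne_univ_of_mem hA (eq_univ_of_forall hw)
  have hAne : A.Nonempty := nonempty_iff_ne_empty.2 fun h => T₁.empty_not_mem (h ▸ hA)
  obtain ⟨x, rfl⟩ | hAnt := hAne.exists_eq_singleton_or_nontrivial
  · exact (T₂.trivial_mem x).resolve_left fun h => hwA (h ▸ mem_univ w)
  -- Relative to the leaf `w`, the splits avoiding `w` behave like the clusters of a rooted tree.
  have hw : univ \ {w} ∈ T₂.splits.filter (w ∉ ·) := by
    obtain ⟨x, hx⟩ := hAne
    refine mem_filter.2 ⟨T₂.compl_mem _ ((T₂.trivial_mem w).resolve_left fun h => ?_), by simp⟩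
    exact hwA (mem_singleton.1 (h ▸ mem_univ x) ▸ hx)
  refine (mem_filter.1 (mem_of_separated (T₂.subset_or_subset_of_inter_nonempty w) hw
    (fun t ht => by simpa using ne_of_mem_of_not_mem ht hwA) hAnt
      fun x hx y hy hxy z hz => ?_)).1
  obtain rfl | hzw := eq_or_ne z w
  · exact ⟨_, hw, by simpa using ne_of_mem_of_not_mem hx hwA,
      by simpa using ne_of_mem_of_not_mem hy hwA, by simp⟩
  obtain ⟨E, hE, hxE, hyE, hzE, hwE⟩ := exists_separating_split h hA hx hy hxy hz hwA hzw
  exact ⟨E, mem_filter.2 ⟨hE, hwE⟩, hxE, hyE, hzE⟩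

theorem pdist_eq_paramDist (p : ℝ) (T₁ T₂ : UTree m) :
    pdist p T₁ T₂ = paramDist (quartets m) Resolved restrict p T₁ T₂ :=
  rfl

theorem pdist_nonneg {p : ℝ} (hp : 0 ≤ p) (T₁ T₂ : UTree m) : 0 ≤ pdist p T₁ T₂ := by
  rw [pdist_eq_paramDist]
  exact paramDist_nonneg hp T₁ T₂

theorem pdist_comm (p : ℝ) (T₁ T₂ : UTree m) : pdist p T₁ T₂ = pdist p T₂ T₁ := by
  simp only [pdist_eq_paramDist]
  exact paramDist_comm p T₁ T₂

theorem pdist_eq_zero_iff {p : ℝ} (hp : 0 < p) {T₁ T₂ : UTree m} :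
    pdist p T₁ T₂ = 0 ↔ T₁ = T₂ := by
  refine ⟨fun h => splits_injective (subset_antisymm ?_ ?_), fun h => ?_⟩
  · rw [pdist_eq_paramDist] at h
    exact splits_subset_of_restrict_eq fun X hX => restrict_eq_of_paramDist_eq_zero hp h hX
  · rw [pdist_comm, pdist_eq_paramDist] at h
    exact splits_subset_of_restrict_eq fun X hX => restrict_eq_of_paramDist_eq_zero hp h hX
  · rw [h, pdist_eq_paramDist]
    exact paramDist_self p T₂

def star (hm : 1 < m) : UTree m where
  splits := starSplits m
  empty_not_mem := by
    simp only [starSplits, mem_union, mem_image, mem_univ, true_and, not_or, not_exists]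
    refine ⟨singleton_ne_empty, fun x h => ?_⟩
    have := card_le_card (sdiff_eq_empty_iff_subset.1 h)
    simp only [card_univ, Fintype.card_fin, card_singleton] at this
    omega
  trivial_mem x := .inr (mem_union_left _ (mem_image_of_mem _ (mem_univ x)))
  compl_mem A hA := by
    rcases mem_union.1 hA with hA | hA <;> obtain ⟨x, -, rfl⟩ := mem_image.1 hA
    · exact mem_union_right _ (mem_image_of_mem _ (mem_univ x))
    · rw [sdiff_sdiff_right_self, inf_eq_inter, univ_inter]
      exact mem_union_left _ (mem_image_of_mem _ (mem_univ x))
  compat A _ _ hB := splitCompatible_of_mem_starSplits A hB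

def addSplit (T : UTree m) (A : Finset (Fin m)) (hA : A.Nonempty) (hAu : A ≠ univ)
    (hcompat : ∀ B ∈ T.splits, SplitCompatible A B) : UTree m where
  splits := insert A (insert (univ \ A) T.splits)
  empty_not_mem := by
    simp only [mem_insert, not_or]
    exact ⟨hA.ne_empty.symm, fun h => hAu (eq_univ_of_forall fun t => by
      simpa using eq_empty_iff_forall_notMem.1 h.symm t), T.empty_not_mem⟩
  trivial_mem x := (T.trivial_mem x).imp_right fun h => mem_insert_of_mem (mem_insert_of_mem h)
  compl_mem := by
    simp only [mem_insert]
    rintro B (rfl | rfl | hB)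
    · exact .inr (.inl rfl)
    · rw [sdiff_sdiff_right_self, inf_eq_inter, univ_inter]
      exact .inl rfl
    · exact .inr (.inr (T.compl_mem B hB))
  compat := by
    have hAA : SplitCompatible A A := .inl subset_rfl
    have hAAc : SplitCompatible A (univ \ A) := .inr (.inr (.inl (inter_sdiff_self A univ)))
    simp only [mem_insert]
    rintro B (rfl | rfl | hB) B' (rfl | rfl | hB')
    · exact hAA
    · exact hAAc
    · exact hcompat B' hB'
    · exact hAAc.symm
    · exact hAA.compl_left.symm.compl_left
    · exact (hcompat B' hB').compl_left
    · exact (hcompat B hB).symm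
    · exact (hcompat B hB).compl_left.symm
    · exact T.compat B hB B' hB'

def cherry (hm : 3 ≤ m) (a b : Fin m) : UTree m :=
  (star (by omega)).addSplit {a, b} (insert_nonempty _ _)
    (fun h => by
      have := (card_le_two : ({a, b} : Finset (Fin m)).card ≤ 2)
      simp only [h, card_univ, Fintype.card_fin] at this
      omega)
    fun _ hB => splitCompatible_of_mem_starSplits _ hB

theorem not_resolved_star (hm : 1 < m) {X : Finset (Fin m)} (hX : X ∈ quartets m) :
    ¬ (star hm).Resolved X := by
  rintro ⟨B, hB, hcard⟩
  have hX4 := (mem_powersetCard_univ.1 hX : X.card = 4)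
  rcases mem_union.1 hB with hB | hB <;> obtain ⟨x, -, rfl⟩ := mem_image.1 hB <;>
    have hx := card_le_card (inter_subset_left : {x} ∩ X ⊆ {x}) <;>
    have := card_univ_sdiff_inter_add_card_inter {x} X <;>
    simp only [card_singleton] at hx <;>
    omega

theorem resolved_addSplit_iff {T : UTree m} {A : Finset (Fin m)} {hA : A.Nonempty}
    {hAu : A ≠ univ} {hcompat : ∀ B ∈ T.splits, SplitCompatible A B} {X : Finset (Fin m)}
    (hX : X.card = 4) :
    (T.addSplit A hA hAu hcompat).Resolved X ↔ (A ∩ X).card = 2 ∨ T.Resolved X := by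
  have hAc : ((univ \ A) ∩ X).card = 2 ↔ (A ∩ X).card = 2 := by
    have := card_univ_sdiff_inter_add_card_inter A X
    omega
  simp only [Resolved, famResolvedU, addSplit, mem_insert, exists_eq_or_imp, hAc]
  rw [← or_assoc, or_self]

theorem cherry_resolved_iff (hm : 3 ≤ m) {a b : Fin m} (hab : a ≠ b) {X : Finset (Fin m)}
    (hX : X ∈ quartets m) : (cherry hm a b).Resolved X ↔ a ∈ X ∧ b ∈ X := by
  rw [cherry, resolved_addSplit_iff (mem_powersetCard_univ.1 hX), card_pair_inter_eq_two hab,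
    or_iff_left (not_resolved_star _ hX)]

theorem eq_of_mem_cherry (hm : 3 ≤ m) {a b c : Fin m} (hba : b ≠ a) (hbc : b ≠ c)
    {E : Finset (Fin m)} (hE : E ∈ (cherry hm a c).splits) (ha : a ∈ E) (hb : b ∈ E)
    (hc : c ∉ E) : E = univ \ {c} := by
  simp only [cherry, addSplit, star, starSplits, mem_insert, mem_union, mem_image, mem_univ,
    true_and] at hE
  rcases hE with rfl | rfl | ⟨x, rfl⟩ | ⟨x, rfl⟩
  · simp [hba, hbc] at hb
  · simp at ha
  · exact absurd ((mem_singleton.1 hb).trans (mem_singleton.1 ha).symm) hba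
  · simp only [mem_sdiff, mem_univ, mem_singleton, true_and, not_not] at hc
    rw [hc]

theorem cherry_restrict_ne (hm : 3 ≤ m) {a b c : Fin m} (hab : a ≠ b) (hac : a ≠ c)
    (hbc : b ≠ c) {X : Finset (Fin m)} (hX : X.card = 4) (ha : a ∈ X) (hb : b ∈ X)
    (hc : c ∈ X) : (cherry hm a b).restrict X ≠ (cherry hm a c).restrict X := by
  intro h
  have hmem : {a, b} ∈ (cherry hm a b).restrict X :=
    mem_restrict.2 ⟨⟨{a, b}, mem_insert_self _ _,
      inter_eq_left.2 (insert_subset ha (singleton_subset_iff.2 hb))⟩, insert_ne_empty _ _,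
      fun h => by simp [← h, card_pair hab] at hX⟩
  rw [h, mem_restrict] at hmem
  obtain ⟨⟨E, hE, hEX⟩, -⟩ := hmem
  obtain ⟨haE, hbE, hcE⟩ := mem_mem_notMem_of_inter_eq_pair hEX hc hac.symm hbc.symm
  have hcard := card_univ_sdiff_inter_add_card_inter {c} X
  rw [← eq_of_mem_cherry hm hab.symm hbc hE haE hbE hcE, hEX, card_pair hab,
    inter_eq_left.2 (singleton_subset_iff.2 hc), card_singleton] at hcard
  omega

theorem exists_ne_pdist_zero (hm : 4 ≤ m) : ∃ T₁ T₂ : UTree m, T₁ ≠ T₂ ∧ pdist 0 T₁ T₂ = 0 := by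
  obtain ⟨X, -, hX⟩ := exists_subset_card_eq (s := (univ : Finset (Fin m))) (by simpa using hm)
  obtain ⟨a, b, c, e, hab, -, -, -, -, -, rfl⟩ := card_eq_four.1 hX
  have hX : {a, b, c, e} ∈ quartets m := mem_powersetCard_univ.2 hX
  have hm3 : 3 ≤ m := by omega
  refine ⟨cherry hm3 a b, star (by omega), fun h => ?_, ?_⟩
  · exact not_resolved_star _ hX (h ▸ (cherry_resolved_iff hm3 hab hX).2 (by simp))
  · rw [pdist_eq_paramDist, paramDist_eq_of_unresolved_right (fun X hX => not_resolved_star _ hX),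
      zero_mul]

theorem exists_pdist_add_pdist_lt (hm : 4 ≤ m) {p : ℝ} (hp : p < 1 / 2) :
    ∃ T₁ T₂ T₃ : UTree m, pdist p T₁ T₂ + pdist p T₂ T₃ < pdist p T₁ T₃ := by
  obtain ⟨X, -, hX⟩ := exists_subset_card_eq (s := (univ : Finset (Fin m))) (by simpa using hm)
  obtain ⟨a, b, c, e, hab, hac, -, hbc, -, -, rfl⟩ := card_eq_four.1 hX
  have hX : {a, b, c, e} ∈ quartets m := mem_powersetCard_univ.2 hX
  have hm3 : 3 ≤ m := by omega
  refine ⟨cherry hm3 a b, star (by omega), cherry hm3 a c, ?_⟩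
  simp only [pdist_eq_paramDist]
  refine paramDist_add_paramDist_lt (fun X hX => not_resolved_star _ hX) hp
    (fun Y hY hYb hYc => ?_) ⟨_, hX, ?_, ?_⟩
  · obtain ⟨ha, hb⟩ := (cherry_resolved_iff hm3 hab hY).1 hYb
    exact cherry_restrict_ne hm3 hab hac hbc (mem_powersetCard_univ.1 hY) ha hb
      ((cherry_resolved_iff hm3 hac hY).1 hYc).2
  · exact (cherry_resolved_iff hm3 hab hX).2 (by simp)
  · exact (cherry_resolved_iff hm3 hac hX).2 (by simp)

end UTree

end Unrooted

/-- **Theorem (parts (i) and (ii)).**  On the rooted phylogenies over a taxon set of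
size `n ≥ 3` and on the unrooted phylogenies over a taxon set of size `m ≥ 4`:
(i) for `p = 0`, `d⁽ᵖ⁾` is not a distance measure — there are distinct trees at
distance `0`; (ii) for every `p ∈ (0, 1/2)`, `d⁽ᵖ⁾` is a distance measure
(nonnegative, symmetric, and vanishing exactly on equal pairs) but not a metric —
the triangle inequality fails for some triple of trees. -/
theorem pdist_not_metric_small_p (n m : ℕ) (hn : 3 ≤ n) (hm : 4 ≤ m) :
    -- (i) rooted
    (∃ T₁ T₂ : RTree n, T₁ ≠ T₂ ∧ RTree.pdist 0 T₁ T₂ = 0) ∧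
    -- (i) unrooted
    (∃ T₁ T₂ : UTree m, T₁ ≠ T₂ ∧ UTree.pdist 0 T₁ T₂ = 0) ∧
    -- (ii)
    ∀ p : ℝ, 0 < p → p < 1 / 2 →
      ((∀ T₁ T₂ : RTree n,
          0 ≤ RTree.pdist p T₁ T₂ ∧ RTree.pdist p T₁ T₂ = RTree.pdist p T₂ T₁ ∧
            (RTree.pdist p T₁ T₂ = 0 ↔ T₁ = T₂)) ∧
        ∃ T₁ T₂ T₃ : RTree n,
          RTree.pdist p T₁ T₂ + RTree.pdist p T₂ T₃ < RTree.pdist p T₁ T₃) ∧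
      (∀ T₁ T₂ : UTree m,
          0 ≤ UTree.pdist p T₁ T₂ ∧ UTree.pdist p T₁ T₂ = UTree.pdist p T₂ T₁ ∧
            (UTree.pdist p T₁ T₂ = 0 ↔ T₁ = T₂)) ∧
        ∃ T₁ T₂ T₃ : UTree m,
          UTree.pdist p T₁ T₂ + UTree.pdist p T₂ T₃ < UTree.pdist p T₁ T₃ := by
  refine ⟨RTree.exists_ne_pdist_zero hn, UTree.exists_ne_pdist_zero hm, fun p hp hp' => ?_⟩
  refine ⟨⟨fun T₁ T₂ => ?_, RTree.exists_pdist_add_pdist_lt hn hp'⟩,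
    fun T₁ T₂ => ?_, UTree.exists_pdist_add_pdist_lt hm hp'⟩
  · exact ⟨RTree.pdist_nonneg hp.le T₁ T₂, RTree.pdist_comm p T₁ T₂, RTree.pdist_eq_zero_iff hp⟩
  · exact ⟨UTree.pdist_nonneg hp.le T₁ T₂, UTree.pdist_comm p T₁ T₂, UTree.pdist_eq_zero_iff hp⟩
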